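/- Let m < M be real numbers, let J be an interval containing [m, M], and let f : J → ℝ be a continuous convex function. Let A, B, C, D ∈ σ(J) satisfy A ≤ m·I, m·I ≤ B ≤ M·I, m·I ≤ C ≤ M·I and M·I ≤ D. If either (i) B + C ≤ A + D and f(m) ≤ f(M), or (ii) A + D ≤ B + C and f(M) ≤ f(m), then f(B) + f(C) ≤ f(A) + f(D) − δ_f · X̃ ≤ f(A) + f(D), where X̃ = I − (1/(M−m))·( |B − ((M+m)/2)·I| + |C − ((M+m)/2)·I| ). -/

import Mathlib

/-!
On `[m, M]` a convex `f` lies below its chord `ℓ` lowered by `δ_f` times the tent function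
`τ(t) = 1/2 - |t - (m+M)/2| / (M - m)` (the piecewise-linear interpolation through `m`, the
midpoint and `M`), while outside `(m, M)` it lies above `ℓ`. Applying the functional calculus,
`f(B) + f(C) ≤ ℓ(B) + ℓ(C) - δ_f (τ(B) + τ(C))` and `ℓ(A) + ℓ(D) ≤ f(A) + f(D)`. Since `ℓ` is
affine with slope of the sign of `f(M) - f(m)`, either condition gives `ℓ(B) + ℓ(C) ≤ ℓ(A) + ℓ(D)`,
and `τ(B) + τ(C) = X̃ ≥ 0` because `τ ≥ 0` on `[m, M]`.
-/

/-- The absolute value of a (self-adjoint) bounded operator, via the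
continuous functional calculus. -/
noncomputable def opAbs {H : Type*} [NormedAddCommGroup H] [InnerProductSpace ℂ H]
    [CompleteSpace H] (A : H →L[ℂ] H) : H →L[ℂ] H :=
  cfc (fun t : ℝ => |t|) A

noncomputable def chord (f : ℝ → ℝ) (m M t : ℝ) : ℝ := f m + slope f m M * (t - m)

lemma continuous_chord (f : ℝ → ℝ) (m M : ℝ) : Continuous (chord f m M) := by
  unfold chord; fun_prop

noncomputable def tent (m M t : ℝ) : ℝ := 2⁻¹ - (M - m)⁻¹ * |t - (M + m) / 2|

lemma continuous_tent (m M : ℝ) : Continuous (tent m M) := by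
  unfold tent; fun_prop

lemma tent_nonneg {m M t : ℝ} (ht : t ∈ Set.Icc m M) : 0 ≤ tent m M t := by
  obtain ⟨htm, htM⟩ := ht
  rcases (htm.trans htM).eq_or_lt with rfl | hmM
  · simp [tent]
  have hdist : |t - (M + m) / 2| ≤ (M - m) / 2 := abs_le.2 ⟨by linarith, by linarith⟩
  rw [tent, sub_nonneg, inv_mul_le_iff₀ (sub_pos.2 hmM)]
  linarith

namespace ConvexOn

variable {J : Set ℝ} {f : ℝ → ℝ}

lemma sub_mul_le_of_le_of_le (hf : ConvexOn ℝ J f) {x y z : ℝ} (hx : x ∈ J) (hz : z ∈ J)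
    (hxy : x ≤ y) (hyz : y ≤ z) : (z - x) * f y ≤ (z - y) * f x + (y - x) * f z := by
  rcases hxy.eq_or_lt with rfl | hxy
  · simp
  rcases hyz.eq_or_lt with rfl | hyz
  · simp
  exact hf.secant_mono_aux1 hx hz hxy hyz

variable {m M : ℝ}

lemma chord_le_of_le_or_le (hf : ConvexOn ℝ J f) (hm : m ∈ J) (hM : M ∈ J) (hmM : m < M)
    {t : ℝ} (ht : t ∈ J) (htmM : t ≤ m ∨ M ≤ t) : chord f m M t ≤ f t := by
  have hMm : 0 < M - m := sub_pos.2 hmM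
  rw [chord, slope_def_field, div_mul_eq_mul_div, ← le_sub_iff_add_le', div_le_iff₀ hMm]
  rcases htmM with htm | hMt
  · linarith [sub_mul_le_of_le_of_le hf ht hM htm hmM.le]
  · linarith [sub_mul_le_of_le_of_le hf hm ht hmM.le hMt]

lemma midpoint_gap_nonneg (hf : ConvexOn ℝ J f) (hm : m ∈ J) (hM : M ∈ J) :
    0 ≤ f m + f M - 2 * f ((m + M) / 2) := by
  have := hf.2 hm hM (by norm_num : (0 : ℝ) ≤ 2⁻¹) (by norm_num : (0 : ℝ) ≤ 2⁻¹) (by norm_num)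
  rw [smul_eq_mul, smul_eq_mul, smul_eq_mul, smul_eq_mul, ← mul_add, inv_mul_eq_div] at this
  linarith

lemma le_chord_sub_mul_tent (hf : ConvexOn ℝ J f) (hJmM : Set.Icc m M ⊆ J) (hmM : m < M)
    {t : ℝ} (ht : t ∈ Set.Icc m M) :
    f t ≤ chord f m M t - (f m + f M - 2 * f ((m + M) / 2)) * tent m M t := by
  obtain ⟨htm, htM⟩ := ht
  have hm : m ∈ J := hJmM ⟨le_rfl, hmM.le⟩
  have hM : M ∈ J := hJmM ⟨hmM.le, le_rfl⟩
  have hc : (m + M) / 2 ∈ J := hJmM ⟨by linarith, by linarith⟩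
  have hMm : 0 < M - m := sub_pos.2 hmM
  rw [chord, tent, slope_def_field]
  rcases le_total t ((M + m) / 2) with htc | hct
  · have := sub_mul_le_of_le_of_le hf hm hc htm (by linarith)
    rw [abs_of_nonpos (by linarith)]
    field_simp
    nlinarith
  · have := sub_mul_le_of_le_of_le hf hc hM (by linarith) htM
    rw [abs_of_nonneg (by linarith)]
    field_simp
    nlinarith

end ConvexOn

lemma slope_smul_le_slope_smul {E : Type*} [AddCommGroup E] [PartialOrder E]
    [IsOrderedAddMonoid E] [Module ℝ E] [PosSMulMono ℝ E] {f : ℝ → ℝ} {m M : ℝ} (hmM : m ≤ M)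
    {x y : E} (h : (x ≤ y ∧ f m ≤ f M) ∨ (y ≤ x ∧ f M ≤ f m)) :
    slope f m M • x ≤ slope f m M • y := by
  have hMm : 0 ≤ M - m := sub_nonneg.2 hmM
  rw [slope_def_field]
  rcases h with ⟨hxy, hf⟩ | ⟨hyx, hf⟩
  · exact smul_le_smul_of_nonneg_left hxy (div_nonneg (sub_nonneg.2 hf) hMm)
  · exact smul_le_smul_of_nonpos_left hyx (div_nonpos_of_nonpos_of_nonneg (sub_nonpos.2 hf) hMm)

section FunctionalCalculus

variable {𝒜 : Type*} [CStarAlgebra 𝒜] {a : 𝒜}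

lemma cfc_sub_const_id (c : ℝ) (ha : IsSelfAdjoint a) : cfc (fun t : ℝ => t - c) a = a - c • 1 := by
  rw [cfc_sub _ _ a, cfc_id' ℝ a, cfc_const c a, Algebra.algebraMap_eq_smul_one]

lemma cfc_chord (f : ℝ → ℝ) (m M : ℝ) (ha : IsSelfAdjoint a) :
    cfc (chord f m M) a = f m • 1 + slope f m M • (a - m • 1) := by
  unfold chord
  rw [cfc_const_add _ _ a, cfc_const_mul _ _ a, cfc_sub_const_id m ha,
    Algebra.algebraMap_eq_smul_one]

lemma cfc_tent (m M : ℝ) (ha : IsSelfAdjoint a) :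
    cfc (tent m M) a =
      (2⁻¹ : ℝ) • 1 - (M - m)⁻¹ • cfc (fun t : ℝ => |t|) (a - ((M + m) / 2) • 1) := by
  unfold tent
  rw [cfc_sub _ _ a, cfc_const _ a, cfc_const_mul _ _ a,
    cfc_comp' (fun t : ℝ => |t|) (fun t => t - (M + m) / 2) a, cfc_sub_const_id _ ha,
    Algebra.algebraMap_eq_smul_one]

variable [PartialOrder 𝒜] [StarOrderedRing 𝒜]

lemma spectrum_subset_Icc {m M : ℝ} (ha : IsSelfAdjoint a) (hma : m • 1 ≤ a) (haM : a ≤ M • 1) :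
    spectrum ℝ a ⊆ Set.Icc m M := by
  rw [← Algebra.algebraMap_eq_smul_one] at hma haM
  exact fun x hx => ⟨(algebraMap_le_iff_le_spectrum ha).1 hma x hx,
    (le_algebraMap_iff_spectrum_le ha).1 haM x hx⟩

variable {J : Set ℝ} {f : ℝ → ℝ} {m M : ℝ}

lemma ConvexOn.cfc_chord_le (hf : ConvexOn ℝ J f) (hfc : ContinuousOn f J) (hm : m ∈ J)
    (hM : M ∈ J) (hmM : m < M) (ha : IsSelfAdjoint a) (hJ : spectrum ℝ a ⊆ J)
    (hout : a ≤ m • 1 ∨ M • 1 ≤ a) : cfc (chord f m M) a ≤ cfc f a := by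
  refine cfc_mono (fun t ht => hf.chord_le_of_le_or_le hm hM hmM (hJ ht) ?_) ?_ (hfc.mono hJ)
  · rw [← Algebra.algebraMap_eq_smul_one, ← Algebra.algebraMap_eq_smul_one] at hout
    exact hout.imp (fun h => (le_algebraMap_iff_spectrum_le ha).1 h t ht)
      (fun h => (algebraMap_le_iff_le_spectrum ha).1 h t ht)
  · exact (continuous_chord f m M).continuousOn

lemma ConvexOn.cfc_le_cfc_chord_sub_smul_tent (hf : ConvexOn ℝ J f) (hfc : ContinuousOn f J)
    (hJmM : Set.Icc m M ⊆ J) (hmM : m < M) (ha : IsSelfAdjoint a) (hma : m • 1 ≤ a)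
    (haM : a ≤ M • 1) :
    cfc f a ≤ cfc (chord f m M) a - (f m + f M - 2 * f ((m + M) / 2)) • cfc (tent m M) a := by
  have hspec := spectrum_subset_Icc ha hma haM
  have := continuous_chord f m M
  have := continuous_tent m M
  rw [← cfc_smul .., ← cfc_sub ..]
  exact cfc_mono (fun t ht => hf.le_chord_sub_mul_tent hJmM hmM (hspec ht))
    (hfc.mono (hspec.trans hJmM))

lemma cfc_tent_nonneg (ha : IsSelfAdjoint a) (hma : m • 1 ≤ a) (haM : a ≤ M • 1) :
    0 ≤ cfc (tent m M) a :=
  cfc_nonneg fun _ ht => tent_nonneg (spectrum_subset_Icc ha hma haM ht)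

lemma cfc_chord_add_le_add (f : ℝ → ℝ) (m M : ℝ) {a b c d : 𝒜} (ha : IsSelfAdjoint a)
    (hb : IsSelfAdjoint b) (hc : IsSelfAdjoint c) (hd : IsSelfAdjoint d)
    (h : slope f m M • (b + c) ≤ slope f m M • (a + d)) :
    cfc (chord f m M) b + cfc (chord f m M) c ≤ cfc (chord f m M) a + cfc (chord f m M) d := by
  rw [cfc_chord f m M ha, cfc_chord f m M hb, cfc_chord f m M hc, cfc_chord f m M hd,
    ← sub_nonneg]
  convert sub_nonneg.2 h using 1
  module

end FunctionalCalculus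

theorem jensen_type_without_sum_condition_general {H : Type*} [NormedAddCommGroup H]
    [InnerProductSpace ℂ H] [CompleteSpace H] (m M : ℝ) (hmM : m < M) (J : Set ℝ)
    (hJmM : Set.Icc m M ⊆ J) (f : ℝ → ℝ)
    (hf : ContinuousOn f J) (hconv : ConvexOn ℝ J f)
    (A B C D : H →L[ℂ] H)
    (hAsa : IsSelfAdjoint A) (hAspec : spectrum ℝ A ⊆ J)
    (hBsa : IsSelfAdjoint B)
    (hCsa : IsSelfAdjoint C)
    (hDsa : IsSelfAdjoint D) (hDspec : spectrum ℝ D ⊆ J)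
    (hA : A ≤ m • 1) (hBl : m • 1 ≤ B) (hBu : B ≤ M • 1)
    (hCl : m • 1 ≤ C) (hCu : C ≤ M • 1) (hD : M • 1 ≤ D)
    (hcond : (B + C ≤ A + D ∧ f m ≤ f M) ∨ (A + D ≤ B + C ∧ f M ≤ f m)) :
    cfc f B + cfc f C ≤
        cfc f A + cfc f D -
          (f m + f M - 2 * f ((m + M) / 2)) •
            ((1 : H →L[ℂ] H) -
              (M - m)⁻¹ •
                (opAbs (B - ((M + m) / 2) • 1) + opAbs (C - ((M + m) / 2) • 1))) ∧
      cfc f A + cfc f D -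
          (f m + f M - 2 * f ((m + M) / 2)) •
            ((1 : H →L[ℂ] H) -
              (M - m)⁻¹ •
                (opAbs (B - ((M + m) / 2) • 1) + opAbs (C - ((M + m) / 2) • 1))) ≤
        cfc f A + cfc f D := by
  have hm : m ∈ J := hJmM ⟨le_rfl, hmM.le⟩
  have hM : M ∈ J := hJmM ⟨hmM.le, le_rfl⟩
  set δ := f m + f M - 2 * f ((m + M) / 2)
  have hX : (1 : H →L[ℂ] H) - (M - m)⁻¹ •
      (opAbs (B - ((M + m) / 2) • 1) + opAbs (C - ((M + m) / 2) • 1)) =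
        cfc (tent m M) B + cfc (tent m M) C := by
    rw [cfc_tent m M hBsa, cfc_tent m M hCsa, opAbs, opAbs]
    module
  rw [hX]
  have hδX : 0 ≤ δ • (cfc (tent m M) B + cfc (tent m M) C) :=
    smul_nonneg (hconv.midpoint_gap_nonneg hm hM)
      (add_nonneg (cfc_tent_nonneg hBsa hBl hBu) (cfc_tent_nonneg hCsa hCl hCu))
  refine ⟨?_, sub_le_self _ hδX⟩
  calc cfc f B + cfc f C
      ≤ (cfc (chord f m M) B - δ • cfc (tent m M) B) +
          (cfc (chord f m M) C - δ • cfc (tent m M) C) :=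
        add_le_add (hconv.cfc_le_cfc_chord_sub_smul_tent hf hJmM hmM hBsa hBl hBu)
          (hconv.cfc_le_cfc_chord_sub_smul_tent hf hJmM hmM hCsa hCl hCu)
    _ = cfc (chord f m M) B + cfc (chord f m M) C -
          δ • (cfc (tent m M) B + cfc (tent m M) C) := by
        rw [smul_add]; abel
    _ ≤ cfc (chord f m M) A + cfc (chord f m M) D -
          δ • (cfc (tent m M) B + cfc (tent m M) C) :=
        sub_le_sub_right (cfc_chord_add_le_add f m M hAsa hBsa hCsa hDsa
          (slope_smul_le_slope_smul hmM.le hcond)) _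
    _ ≤ cfc f A + cfc f D - δ • (cfc (tent m M) B + cfc (tent m M) C) :=
        sub_le_sub_right (add_le_add
          (hconv.cfc_chord_le hf hm hM hmM hAsa hAspec (Or.inl hA))
          (hconv.cfc_chord_le hf hm hM hmM hDsa hDspec (Or.inr hD))) _

/-- Theorem 3.7, convex case. -/
theorem jensen_type_without_sum_condition {H : Type*} [NormedAddCommGroup H]
    [InnerProductSpace ℂ H] [CompleteSpace H] (m M : ℝ) (hmM : m < M) (J : Set ℝ)
    (hJ : J.OrdConnected) (hJmM : Set.Icc m M ⊆ J) (f : ℝ → ℝ)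
    (hf : ContinuousOn f J) (hconv : ConvexOn ℝ J f)
    (A B C D : H →L[ℂ] H)
    (hAsa : IsSelfAdjoint A) (hAspec : spectrum ℝ A ⊆ J)
    (hBsa : IsSelfAdjoint B) (hBspec : spectrum ℝ B ⊆ J)
    (hCsa : IsSelfAdjoint C) (hCspec : spectrum ℝ C ⊆ J)
    (hDsa : IsSelfAdjoint D) (hDspec : spectrum ℝ D ⊆ J)
    (hA : A ≤ m • 1) (hBl : m • 1 ≤ B) (hBu : B ≤ M • 1)
    (hCl : m • 1 ≤ C) (hCu : C ≤ M • 1) (hD : M • 1 ≤ D)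
    (hcond : (B + C ≤ A + D ∧ f m ≤ f M) ∨ (A + D ≤ B + C ∧ f M ≤ f m)) :
    cfc f B + cfc f C ≤
        cfc f A + cfc f D -
          (f m + f M - 2 * f ((m + M) / 2)) •
            ((1 : H →L[ℂ] H) -
              (M - m)⁻¹ •
                (opAbs (B - ((M + m) / 2) • 1) + opAbs (C - ((M + m) / 2) • 1))) ∧
      cfc f A + cfc f D -
          (f m + f M - 2 * f ((m + M) / 2)) •
            ((1 : H →L[ℂ] H) -
              (M - m)⁻¹ •
                (opAbs (B - ((M + m) / 2) • 1) + opAbs (C - ((M + m) / 2) • 1))) ≤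
        cfc f A + cfc f D :=
  jensen_type_without_sum_condition_general m M hmM J hJmM f hf hconv A B C D hAsa hAspec hBsa hCsa
    hDsa hDspec hA hBl hBu hCl hCu hD hcond
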